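/- arXiv:2101.04551 — 3 statements merged into one kernel-verified Lean document; each statement's English description precedes it below -/
import Mathlib

section
/- Let n∈ℕ, let w be any one of the four Chebyshev weights, let t_k^n (k=1,…,n) be the corresponding angular nodes, and set Δt_k^n = t_k^n − t_{k−1}^n with t_0^n=0, and n_w=n for w=w1, n_w=n+1 for w=w2, n_w=(2n+1)/2 for w=w3 and w=w4. Then for every ν∈ℕ and every trigonometric polynomial Q of degree at most ν that is either an even function or an odd function: Σ_{k=1}^n |Q(t_k^n)|·Δt_k^n ≤ (1 + 2πν/n_w)·∫_0^π |Q(τ)| dτ. -/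
open Real Set Finset Polynomial

noncomputable section

/-- The four kinds of Chebyshev weights. -/
inductive ChebKind | one | two | three | four

/-- The Chebyshev weight function of each kind. -/
noncomputable def wFn : ChebKind → ℝ → ℝ
  | .one,   x => 1 / Real.sqrt (1 - x ^ 2)
  | .two,   x => Real.sqrt (1 - x ^ 2)
  | .three, x => Real.sqrt ((1 + x) / (1 - x))
  | .four,  x => Real.sqrt ((1 - x) / (1 + x))

/-- The orthonormal polynomials associated with each Chebyshev weight
(`p_j(w,·)`), expressed via Mathlib's Chebyshev polynomials of the first and
second kind.  On `[-1,1]` these coincide with the usual trigonometric forms. -/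
noncomputable def pPoly : ChebKind → ℕ → Polynomial ℝ
  | .one, 0       => Polynomial.C (1 / Real.sqrt π)
  | .one, (j + 1) => Polynomial.C (Real.sqrt (2 / π)) * Polynomial.Chebyshev.T ℝ ((j : ℤ) + 1)
  | .two, j       => Polynomial.C (Real.sqrt (2 / π)) * Polynomial.Chebyshev.U ℝ (j : ℤ)
  | .three, j     => Polynomial.C (1 / Real.sqrt π) *
      (Polynomial.Chebyshev.U ℝ (j : ℤ) - Polynomial.Chebyshev.U ℝ ((j : ℤ) - 1))
  | .four, j      => Polynomial.C (1 / Real.sqrt π) *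
      (Polynomial.Chebyshev.U ℝ (j : ℤ) + Polynomial.Chebyshev.U ℝ ((j : ℤ) - 1))

noncomputable def pEval (w : ChebKind) (j : ℕ) (x : ℝ) : ℝ := (pPoly w j).eval x

/-- Angular Chebyshev nodes `t_k^n`. -/
noncomputable def tNode : ChebKind → ℕ → ℕ → ℝ
  | .one,   n, k => (2 * (k : ℝ) - 1) * π / (2 * n)
  | .two,   n, k => (k : ℝ) * π / (n + 1)
  | .three, n, k => (2 * (k : ℝ) - 1) * π / (2 * n + 1)
  | .four,  n, k => 2 * (k : ℝ) * π / (2 * n + 1)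

/-- Chebyshev nodes `x_k^n = cos t_k^n`, zeros of `p_n(w,·)`. -/
noncomputable def xNode (w : ChebKind) (n k : ℕ) : ℝ := Real.cos (tNode w n k)

/-- Christoffel numbers `λ_k^n`. -/
noncomputable def lam : ChebKind → ℕ → ℕ → ℝ
  | .one,   n, _ => π / n
  | .two,   n, k => π / (n + 1) * Real.sin (tNode .two n k) ^ 2
  | .three, n, k => 4 * π / (2 * n + 1) * Real.cos (tNode .three n k / 2) ^ 2
  | .four,  n, k => 4 * π / (2 * n + 1) * Real.sin (tNode .four n k / 2) ^ 2

/-- de la Vallée Poussin filter coefficients `μ_{n,j}^m`. -/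
noncomputable def mufilt (n m j : ℕ) : ℝ :=
  if j ≤ n - m then 1 else ((n : ℝ) + m - j) / (2 * m)

/-- Fundamental VP polynomials `Φ_{n,k}^m(w;x)`. -/
noncomputable def Phi (w : ChebKind) (n m k : ℕ) (x : ℝ) : ℝ :=
  lam w n k * ∑ j ∈ Finset.range (n + m), mufilt n m j * pEval w j (xNode w n k) * pEval w j x

/-- The VP interpolation polynomial `V_n^m f`. -/
noncomputable def VP (w : ChebKind) (n m : ℕ) (f : ℝ → ℝ) (x : ℝ) : ℝ :=
  ∑ k ∈ Finset.Icc 1 n, f (xNode w n k) * Phi w n m k x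

/-- Jacobi weight `u(x) = (1-x)^γ (1+x)^δ`. -/
noncomputable def jac (γ δ : ℝ) (x : ℝ) : ℝ := (1 - x) ^ γ * (1 + x) ^ δ

/-- Weighted uniform norm `‖f·u‖ = max_{|x|≤1} |f(x) u(x)|`. -/
noncomputable def wnorm (γ δ : ℝ) (f : ℝ → ℝ) : ℝ :=
  sSup ((fun x => |f x * jac γ δ x|) '' Set.Icc (-1 : ℝ) 1)

/-- Error of best weighted polynomial approximation `E_n(f)_u`. -/
noncomputable def bestE (γ δ : ℝ) (n : ℕ) (f : ℝ → ℝ) : ℝ :=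
  sInf ((fun P : Polynomial ℝ => wnorm γ δ (fun x => f x - P.eval x)) ''
    {P : Polynomial ℝ | P.natDegree ≤ n})

/-- Membership in the space `C^0_u`: `f` is continuous on compact subsets of
`(-1,1)`, `f·u` extends continuously to `[-1,1]`, with value (= limit) `0` at
`±1` when the corresponding exponent is positive. -/
def MemC0 (γ δ : ℝ) (f : ℝ → ℝ) : Prop :=
  ContinuousOn f (Set.Ioo (-1 : ℝ) 1) ∧
  ContinuousOn (fun x => f x * jac γ δ x) (Set.Icc (-1 : ℝ) 1) ∧
  (0 < γ → f 1 * jac γ δ 1 = 0) ∧ (0 < δ → f (-1) * jac γ δ (-1) = 0)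

/-- Conditions (hp-u) on the exponents of `u=(1-x)^γ(1+x)^δ` relative to `w`. -/
def hpu : ChebKind → ℝ → ℝ → Prop
  | .one,   γ, δ => 0 ≤ γ ∧ γ ≤ 1 ∧ 0 ≤ δ ∧ δ ≤ 1
  | .two,   γ, δ => 0 < γ ∧ γ ≤ 3 / 2 ∧ 0 < δ ∧ δ ≤ 3 / 2 ∧ -1 ≤ γ - δ ∧ γ - δ ≤ 1
  | .three, γ, δ => 0 ≤ γ ∧ γ ≤ 1 ∧ 0 < δ ∧ δ ≤ 3 / 2 ∧ γ - δ ≤ 1 / 2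
  | .four,  γ, δ => 0 < γ ∧ γ ≤ 3 / 2 ∧ 0 ≤ δ ∧ δ ≤ 1 ∧ -(1 / 2) ≤ γ - δ

/-- `φ(x) = sqrt(1-x²)`. -/
noncomputable def phi (x : ℝ) : ℝ := Real.sqrt (1 - x ^ 2)

/-- The set of values `|f^{(r)}(x)| φ(x)^r u(x)`, `x ∈ (-1,1)`. -/
noncomputable def derSet (γ δ : ℝ) (r : ℕ) (f : ℝ → ℝ) : Set ℝ :=
  (fun x : ℝ => |iteratedDerivWithin r f (Set.Ioo (-1 : ℝ) 1) x| * phi x ^ r * jac γ δ x) ''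
    Set.Ioo (-1 : ℝ) 1

/-- Membership in the Sobolev-type space `W_r(u)`. -/
def MemW (γ δ : ℝ) (r : ℕ) (f : ℝ → ℝ) : Prop :=
  MemC0 γ δ f ∧ ContDiffOn ℝ r f (Set.Ioo (-1 : ℝ) 1) ∧ BddAbove (derSet γ δ r f)

/-- The norm of `W_r(u)`: `‖fu‖ + ‖f^{(r)} φ^r u‖`. -/
noncomputable def Wnorm (γ δ : ℝ) (r : ℕ) (f : ℝ → ℝ) : ℝ :=
  wnorm γ δ f + sSup (derSet γ δ r f)

/-- The set of values `(n+1)^r E_n(f)_u`, `n ≥ 1`. -/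
noncomputable def zSet (γ δ r : ℝ) (f : ℝ → ℝ) : Set ℝ :=
  (fun n : ℕ => ((n : ℝ) + 1) ^ r * bestE γ δ n f) '' {n : ℕ | 1 ≤ n}

/-- Membership in the Hölder–Zygmund space `Z_r(u)`. -/
def MemZ (γ δ r : ℝ) (f : ℝ → ℝ) : Prop := MemC0 γ δ f ∧ BddAbove (zSet γ δ r f)

/-- The norm of `Z_r(u)`: `‖fu‖ + sup_{n≥1} (n+1)^r E_n(f)_u`. -/
noncomputable def Znorm (γ δ r : ℝ) (f : ℝ → ℝ) : ℝ :=
  wnorm γ δ f + sSup (zSet γ δ r f)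

/-- Exponents `(γ,δ)` of the weight `u = sqrt(w·φ)`. -/
def uExp : ChebKind → ℝ × ℝ
  | .one => (0, 0) | .two => (1 / 2, 1 / 2) | .three => (0, 1 / 2) | .four => (1 / 2, 0)

/-- The constant `C_w`. -/
def Cw : ChebKind → ℝ | .one => 2 | _ => 1

/-- The quantity `n_w`. -/
noncomputable def nw : ChebKind → ℕ → ℝ
  | .one, n => n | .two, n => n + 1
  | .three, n => (2 * (n : ℝ) + 1) / 2 | .four, n => (2 * (n : ℝ) + 1) / 2

/-- The quantity `m_w`. -/
noncomputable def mw : ChebKind → ℕ → ℕ → ℝ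
  | .one, n, m => (n : ℝ) + m | .two, n, m => (n : ℝ) + m
  | .three, n, m => 2 * ((n : ℝ) + m) - 1 | .four, n, m => 2 * ((n : ℝ) + m) - 1

/-- The polynomials `q_{n,j}^m(w,·)` (orthogonal VP basis). -/
noncomputable def qq (w : ChebKind) (n m j : ℕ) (x : ℝ) : ℝ :=
  if j ≤ n - m then pEval w j x
  else ((m : ℝ) + n - j) / (2 * m) * pEval w j x
    - ((m : ℝ) + j - n) / (2 * m) * pEval w (2 * n - j) x

end

/-!
On each gap `[t_{k-1}, t_k]`, of length at most `π / n_w`, the fundamental theorem of calculus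
gives `|Q(t_k)| ≤ |Q(τ)| + ∫_{t_{k-1}}^{t_k} |Q'|`; averaging over `τ` and summing bounds the node
sum by `∫_0^π |Q| + (π / n_w) ∫_0^π |Q'|`. It remains to prove the `L¹` Bernstein inequality
`∫_0^π |Q'| ≤ 2ν ∫_0^π |Q|`, which by parity is the same statement over a full period.
There it follows from `-π Q' = Q ∗ (sin (ν·) F)`, where `F = |∑_{l<ν} e^{il·}|² ≥ 0` has
integral `2πν`: the kernel is orthogonal to `cos (j·)` because it is odd, and pairs with
`sin (j·)` to `π j` for `j ≤ ν` by counting the Fourier coefficients `ν - |d|` of `F`.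
-/

open intervalIntegral

lemma integral_cos_int_mul (k : ℤ) :
    ∫ t in (0 : ℝ)..2 * π, cos (k * t) = if k = 0 then 2 * π else 0 := by
  split_ifs with hk
  · simp [hk]
  · rw [integral_comp_mul_left (fun t => cos t) (Int.cast_ne_zero.mpr hk), integral_cos,
      mul_zero, sin_zero, sub_zero, smul_eq_mul,
      show (k : ℝ) * (2 * π) = (2 * k : ℤ) * π by push_cast; ring, sin_int_mul_pi, mul_zero]

lemma sum_range_sum_range_ite_add_eq (a ν : ℕ) (x : ℝ) :
    ∑ l ∈ range ν, ∑ m ∈ range ν, (if a + m = l then x else 0) = (ν - a : ℕ) * x := by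
  rw [Finset.sum_comm]
  simp only [Finset.sum_ite_eq, Finset.mem_range, ← Finset.sum_filter, Finset.sum_const,
    nsmul_eq_mul]
  congr 2
  rw [← Finset.card_range (ν - a)]
  congr 1
  ext m
  simp only [Finset.mem_filter, Finset.mem_range]
  omega

/-- `ν` times the Fejér kernel of order `ν`, i.e. `|∑_{l<ν} e^{ilt}|²`. -/
noncomputable def fejer (ν : ℕ) (t : ℝ) : ℝ :=
  (∑ l ∈ range ν, cos (l * t)) ^ 2 + (∑ l ∈ range ν, sin (l * t)) ^ 2

lemma fejer_nonneg (ν : ℕ) (t : ℝ) : 0 ≤ fejer ν t := by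
  unfold fejer; positivity

@[fun_prop]
lemma continuous_fejer (ν : ℕ) : Continuous (fejer ν) := by
  unfold fejer; fun_prop

lemma fejer_even (ν : ℕ) : (fejer ν).Even := by
  intro t
  simp only [fejer, mul_neg, cos_neg, sin_neg, Finset.sum_neg_distrib, neg_sq]

lemma fejer_eq_sum_cos (ν : ℕ) (t : ℝ) :
    fejer ν t = ∑ l ∈ range ν, ∑ m ∈ range ν, cos (((l : ℝ) - m) * t) := by
  simp only [fejer, sq, Finset.sum_mul_sum, ← Finset.sum_add_distrib, sub_mul, cos_sub]

lemma integral_cos_mul_fejer (a ν : ℕ) :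
    ∫ t in (0 : ℝ)..2 * π, cos (a * t) * fejer ν t = 2 * π * (ν - a : ℕ) := by
  have hprod : ∀ l m : ℕ, ∀ t : ℝ, cos (a * t) * cos (((l : ℝ) - m) * t)
      = (cos (((a + m - l : ℤ) : ℝ) * t) + cos (((a + l - m : ℤ) : ℝ) * t)) / 2 := by
    intro l m t
    rw [eq_div_iff two_ne_zero, mul_comm, ← mul_assoc, two_mul_cos_mul_cos]
    push_cast
    ring_nf
  have hterm : ∀ l m : ℕ, ∫ t in (0 : ℝ)..2 * π, cos (a * t) * cos (((l : ℝ) - m) * t)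
      = (if a + m = l then π else 0) + (if a + l = m then π else 0) := by
    intro l m
    simp only [hprod]
    rw [integral_div, integral_add (Continuous.intervalIntegrable (by fun_prop) _ _)
      (Continuous.intervalIntegrable (by fun_prop) _ _), integral_cos_int_mul,
      integral_cos_int_mul]
    split_ifs <;> first | (exfalso; omega) | ring
  have hrow : ∀ l : ℕ,
      ∫ t in (0 : ℝ)..2 * π, ∑ m ∈ range ν, cos (a * t) * cos (((l : ℝ) - m) * t)
      = ∑ m ∈ range ν, ((if a + m = l then π else 0) + (if a + l = m then π else 0)) := by
    intro l
    rw [integral_finsetSum fun _ _ => Continuous.intervalIntegrable (by fun_prop) _ _]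
    simp only [hterm]
  simp only [fejer_eq_sum_cos, Finset.mul_sum]
  rw [integral_finsetSum fun _ _ => Continuous.intervalIntegrable (by fun_prop) _ _]
  simp only [hrow, Finset.sum_add_distrib, sum_range_sum_range_ite_add_eq]
  rw [Finset.sum_comm (f := fun l m => if a + l = m then π else 0),
    sum_range_sum_range_ite_add_eq]
  ring

lemma integral_sin_mul_sin_mul_fejer {j ν : ℕ} (hj : j ≤ ν) :
    ∫ t in (0 : ℝ)..2 * π, sin (j * t) * (sin (ν * t) * fejer ν t) = π * j := by
  have hprod : ∀ t : ℝ, sin (j * t) * (sin (ν * t) * fejer ν t)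
      = (cos ((ν - j : ℕ) * t) * fejer ν t - cos ((ν + j : ℕ) * t) * fejer ν t) / 2 := by
    intro t
    push_cast [Nat.cast_sub hj]
    rw [sub_mul, add_mul, cos_sub, cos_add]
    ring
  simp only [hprod]
  rw [integral_div, integral_sub (Continuous.intervalIntegrable (by fun_prop) _ _)
    (Continuous.intervalIntegrable (by fun_prop) _ _), integral_cos_mul_fejer,
    integral_cos_mul_fejer, Nat.sub_sub_self hj, show ν - (ν + j) = 0 by omega]
  push_cast
  ring

section Parity

variable {𝕜 F : Type*} [NontriviallyNormedField 𝕜] [NormedAddCommGroup F] [NormedSpace 𝕜 F]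
  {f : 𝕜 → F}

lemma Function.Even.deriv (hf : f.Even) : (_root_.deriv f).Odd := by
  intro x
  have h := deriv_comp_neg f x
  rw [funext hf] at h
  rw [h, neg_neg]

lemma Function.Odd.deriv (hf : f.Odd) : (_root_.deriv f).Even := by
  intro x
  have h := deriv_comp_neg f x
  rw [show (fun y => f (-y)) = -f from funext hf, deriv.neg] at h
  exact neg_injective h.symm

end Parity

lemma even_abs_of_even_or_odd {f : ℝ → ℝ} (hf : f.Even ∨ f.Odd) :
    (fun x => |f x|).Even := by
  rcases hf with hf | hf <;> intro x <;> simp only [hf x, abs_neg]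

section PeriodicIntegral

variable {f : ℝ → ℝ} {c : ℝ}

lemma Function.Periodic.integral_two_mul_eq_integral_add_comp_neg (hf : Periodic f (2 * c))
    (hfc : Continuous f) :
    ∫ x in (0 : ℝ)..2 * c, f x = ∫ x in (0 : ℝ)..c, (f x + f (-x)) := by
  have hshift : ∫ x in (0 : ℝ)..2 * c, f x = ∫ x in -c..c, f x := by
    simpa [show -c + 2 * c = c by ring] using (hf.intervalIntegral_add_eq (-c) 0).symm
  rw [hshift, ← integral_add_adjacent_intervals (b := 0) (hfc.intervalIntegrable _ _)
    (hfc.intervalIntegrable _ _), integral_add (g := fun x => f (-x))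
    (hfc.intervalIntegrable _ _) ((hfc.comp continuous_neg).intervalIntegrable _ _),
    integral_comp_neg, neg_zero, add_comm]

lemma Function.Periodic.integral_two_mul_eq_of_even (hf : Periodic f (2 * c))
    (hfc : Continuous f) (heven : f.Even) :
    ∫ x in (0 : ℝ)..2 * c, f x = 2 * ∫ x in (0 : ℝ)..c, f x := by
  simp only [hf.integral_two_mul_eq_integral_add_comp_neg hfc, heven _, ← two_mul,
    integral_const_mul]

lemma Function.Periodic.integral_two_mul_eq_zero_of_odd (hf : Periodic f (2 * c))
    (hfc : Continuous f) (hodd : f.Odd) : ∫ x in (0 : ℝ)..2 * c, f x = 0 := by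
  simp only [hf.integral_two_mul_eq_integral_add_comp_neg hfc, hodd _, add_neg_cancel,
    integral_zero]

lemma Function.Periodic.integral_integral_comp_sub_mul {T : ℝ} {g : ℝ → ℝ}
    (hf : Periodic f T) (hfc : Continuous f) (hgc : Continuous g) :
    ∫ x in (0 : ℝ)..T, ∫ t in (0 : ℝ)..T, f (x - t) * g t
      = (∫ x in (0 : ℝ)..T, f x) * ∫ t in (0 : ℝ)..T, g t := by
  have hint : MeasureTheory.IntegrableOn (Function.uncurry fun x t => f (x - t) * g t)
      (uIoc 0 T ×ˢ uIoc 0 T) :=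
    ((by fun_prop : Continuous (Function.uncurry fun x t => f (x - t) * g t)).continuousOn
      |>.integrableOn_compact (isCompact_uIcc.prod isCompact_uIcc)).mono_set
      (prod_mono uIoc_subset_uIcc uIoc_subset_uIcc)
  have hshift : ∀ t, ∫ x in (0 : ℝ)..T, f (x - t) = ∫ x in (0 : ℝ)..T, f x := fun t => by
    rw [integral_comp_sub_right, zero_sub, show T - t = -t + T by ring,
      hf.intervalIntegral_add_eq (-t) 0, zero_add]
  rw [MeasureTheory.intervalIntegral_intervalIntegral_swap hint, ← integral_const_mul]
  simp only [integral_mul_const, hshift]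

end PeriodicIntegral

lemma cos_nat_mul_periodic (k : ℕ) : Function.Periodic (fun t => cos (k * t)) (2 * π) :=
  fun t => by simp only [mul_add, cos_add_nat_mul_two_pi]

lemma sin_nat_mul_periodic (k : ℕ) : Function.Periodic (fun t => sin (k * t)) (2 * π) :=
  fun t => by simp only [mul_add, sin_add_nat_mul_two_pi]

lemma fejer_periodic (ν : ℕ) : Function.Periodic (fejer ν) (2 * π) := fun t => by
  simp only [fejer, cos_nat_mul_periodic _ t, sin_nat_mul_periodic _ t]

lemma integral_fejer (ν : ℕ) : ∫ t in (0 : ℝ)..2 * π, fejer ν t = 2 * π * ν := by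
  simpa using integral_cos_mul_fejer 0 ν

lemma integral_cos_mul_sin_mul_fejer (j ν : ℕ) :
    ∫ t in (0 : ℝ)..2 * π, cos (j * t) * (sin (ν * t) * fejer ν t) = 0 := by
  refine Function.Periodic.integral_two_mul_eq_zero_of_odd ?_ (by fun_prop) fun t => ?_
  · exact (cos_nat_mul_periodic j).mul ((sin_nat_mul_periodic ν).mul (fejer_periodic ν))
  · simp only [mul_neg, cos_neg, sin_neg, fejer_even ν t, neg_mul, mul_neg]

noncomputable def trigPoly (ν : ℕ) (a b : ℕ → ℝ) (τ : ℝ) : ℝ :=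
  ∑ j ∈ range (ν + 1), (a j * cos (j * τ) + b j * sin (j * τ))

section TrigPoly

variable (ν : ℕ) (a b : ℕ → ℝ)

@[fun_prop]
lemma continuous_trigPoly : Continuous (trigPoly ν a b) := by
  unfold trigPoly; fun_prop

lemma trigPoly_periodic : Function.Periodic (trigPoly ν a b) (2 * π) := fun τ => by
  simp only [trigPoly, cos_nat_mul_periodic _ τ, sin_nat_mul_periodic _ τ]

lemma abs_trigPoly_periodic : Function.Periodic (fun x => |trigPoly ν a b x|) (2 * π) :=
  (trigPoly_periodic ν a b).comp abs

lemma hasDerivAt_trigPoly (τ : ℝ) :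
    HasDerivAt (trigPoly ν a b) (trigPoly ν (fun j => j * b j) (fun j => -(j * a j)) τ) τ := by
  unfold trigPoly
  refine HasDerivAt.fun_sum fun j _ => ?_
  have hlin : HasDerivAt (fun τ : ℝ => (j : ℝ) * τ) j τ := by
    simpa using (hasDerivAt_id τ).const_mul (j : ℝ)
  convert (hlin.cos.const_mul (a j)).fun_add (hlin.sin.const_mul (b j)) using 1
  beta_reduce
  ring

lemma deriv_trigPoly :
    deriv (trigPoly ν a b) = trigPoly ν (fun j => j * b j) (fun j => -(j * a j)) :=
  funext fun τ => (hasDerivAt_trigPoly ν a b τ).deriv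

lemma integral_trigPoly_sub_mul_sin_mul_fejer (x : ℝ) :
    ∫ t in (0 : ℝ)..2 * π, trigPoly ν a b (x - t) * (sin (ν * t) * fejer ν t)
      = -π * deriv (trigPoly ν a b) x := by
  have hexpand : ∀ t g, trigPoly ν a b (x - t) * g = ∑ j ∈ range (ν + 1),
      ((a j * cos (j * x) + b j * sin (j * x)) * (cos (j * t) * g)
        + (a j * sin (j * x) - b j * cos (j * x)) * (sin (j * t) * g)) := by
    intro t g
    simp only [trigPoly, Finset.sum_mul, mul_sub, cos_sub, sin_sub]
    exact Finset.sum_congr rfl fun j _ => by ring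
  simp only [hexpand]
  rw [integral_finsetSum fun _ _ => Continuous.intervalIntegrable (by fun_prop) _ _,
    deriv_trigPoly, trigPoly, Finset.mul_sum]
  refine Finset.sum_congr rfl fun j hj => ?_
  rw [integral_add (Continuous.intervalIntegrable (by fun_prop) _ _)
      (Continuous.intervalIntegrable (by fun_prop) _ _), integral_const_mul, integral_const_mul,
    integral_cos_mul_sin_mul_fejer,
    integral_sin_mul_sin_mul_fejer (Nat.lt_succ_iff.mp (Finset.mem_range.mp hj))]
  ring

lemma integral_abs_deriv_trigPoly_le :
    ∫ x in (0 : ℝ)..2 * π, |deriv (trigPoly ν a b) x|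
      ≤ 2 * ν * ∫ x in (0 : ℝ)..2 * π, |trigPoly ν a b x| := by
  set Q := trigPoly ν a b
  have h2π : (0 : ℝ) ≤ 2 * π := by positivity
  have hQ' : Continuous (deriv Q) := by rw [deriv_trigPoly]; fun_prop
  have hpoint : ∀ x, π * |deriv Q x| ≤ ∫ t in (0 : ℝ)..2 * π, |Q (x - t)| * fejer ν t :=
    fun x => calc
      π * |deriv Q x| = |∫ t in (0 : ℝ)..2 * π, Q (x - t) * (sin (ν * t) * fejer ν t)| := by
        rw [integral_trigPoly_sub_mul_sin_mul_fejer, abs_mul, abs_neg, abs_of_pos pi_pos]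
      _ ≤ ∫ t in (0 : ℝ)..2 * π, |Q (x - t) * (sin (ν * t) * fejer ν t)| :=
        abs_integral_le_integral_abs h2π
      _ ≤ ∫ t in (0 : ℝ)..2 * π, |Q (x - t)| * fejer ν t := by
        refine integral_mono_on h2π (Continuous.intervalIntegrable (by fun_prop) _ _)
          (Continuous.intervalIntegrable (by fun_prop) _ _) fun t _ => ?_
        rw [abs_mul, abs_mul, abs_of_nonneg (fejer_nonneg ν t)]
        gcongr
        exact mul_le_of_le_one_left (fejer_nonneg ν t) (abs_sin_le_one _)
  have hint : π * ∫ x in (0 : ℝ)..2 * π, |deriv Q x|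
      ≤ (∫ x in (0 : ℝ)..2 * π, |Q x|) * (2 * π * ν) := by
    rw [← integral_fejer, ← (abs_trigPoly_periodic ν a b).integral_integral_comp_sub_mul
      (by fun_prop) (continuous_fejer ν), ← integral_const_mul]
    exact integral_mono_on h2π (Continuous.intervalIntegrable (by fun_prop) _ _)
      (Continuous.intervalIntegrable (by fun_prop) _ _) fun x _ => hpoint x
  nlinarith [pi_pos]

lemma integral_abs_deriv_trigPoly_le_of_even_or_odd
    (hpar : (trigPoly ν a b).Even ∨ (trigPoly ν a b).Odd) :
    ∫ x in (0 : ℝ)..π, |deriv (trigPoly ν a b) x|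
      ≤ 2 * ν * ∫ x in (0 : ℝ)..π, |trigPoly ν a b x| := by
  have heven := even_abs_of_even_or_odd hpar
  have heven' := even_abs_of_even_or_odd (hpar.symm.imp Function.Odd.deriv Function.Even.deriv)
  have hfull := integral_abs_deriv_trigPoly_le ν a b
  rw [deriv_trigPoly] at heven' hfull ⊢
  rw [(abs_trigPoly_periodic ν a b).integral_two_mul_eq_of_even (by fun_prop) heven,
    (abs_trigPoly_periodic ν _ _).integral_two_mul_eq_of_even (by fun_prop) heven'] at hfull
  linarith

end TrigPoly

section RiemannSum

variable {S : ℝ → ℝ}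

lemma abs_mul_sub_le_integral (hS : Differentiable ℝ S) (hS' : Continuous (deriv S)) {u v : ℝ}
    (huv : u ≤ v) :
    |S v| * (v - u) ≤ (∫ τ in u..v, |S τ|) + (v - u) * ∫ τ in u..v, |deriv S τ| := by
  have hpoint : ∀ τ ∈ Icc u v, |S v| ≤ |S τ| + ∫ σ in u..v, |deriv S σ| := by
    intro τ hτ
    have hftc : S v - S τ = ∫ σ in τ..v, deriv S σ :=
      (integral_deriv_eq_sub (fun σ _ => hS σ) (hS'.intervalIntegrable _ _)).symm
    have hsub : |S v - S τ| ≤ ∫ σ in u..v, |deriv S σ| := by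
      rw [hftc]
      exact (abs_integral_le_integral_abs hτ.2).trans <| integral_mono_interval hτ.1 hτ.2 le_rfl
        (Filter.Eventually.of_forall fun _ => abs_nonneg _) (hS'.abs.intervalIntegrable _ _)
    linarith [abs_sub_abs_le_abs_sub (S v) (S τ)]
  calc |S v| * (v - u) = ∫ _ in u..v, |S v| := by rw [integral_const, smul_eq_mul, mul_comm]
    _ ≤ ∫ τ in u..v, (|S τ| + ∫ σ in u..v, |deriv S σ|) :=
      integral_mono_on huv intervalIntegrable_const
        ((hS.continuous.abs.add continuous_const).intervalIntegrable _ _) hpoint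
    _ = (∫ τ in u..v, |S τ|) + (v - u) * ∫ τ in u..v, |deriv S τ| := by
      rw [integral_add (hS.continuous.abs.intervalIntegrable _ _) intervalIntegrable_const,
        integral_const, smul_eq_mul]

lemma sum_Icc_abs_mul_sub_le (hS : Differentiable ℝ S) (hS' : Continuous (deriv S))
    {s : ℕ → ℝ} {Δ : ℝ} (hs : Monotone s)
    (hgap : ∀ k, s (k + 1) - s k ≤ Δ) (n : ℕ) :
    ∑ k ∈ Icc 1 n, |S (s k)| * (s k - s (k - 1))
      ≤ (∫ τ in s 0..s n, |S τ|) + Δ * ∫ τ in s 0..s n, |deriv S τ| := by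
  induction n with
  | zero => simp
  | succ n ih =>
    have hstep := abs_mul_sub_le_integral hS hS' (hs n.le_succ)
    have hgapD : (s (n + 1) - s n) * ∫ τ in s n..s (n + 1), |deriv S τ|
        ≤ Δ * ∫ τ in s n..s (n + 1), |deriv S τ| :=
      mul_le_mul_of_nonneg_right (hgap n)
        (integral_nonneg (hs n.le_succ) fun _ _ => abs_nonneg _)
    rw [sum_Icc_succ_top (by omega), Nat.add_sub_cancel,
      ← integral_add_adjacent_intervals (b := s n) (hS.continuous.abs.intervalIntegrable _ _)
        (hS.continuous.abs.intervalIntegrable _ _),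
      ← integral_add_adjacent_intervals (b := s n) (hS'.abs.intervalIntegrable _ _)
        (hS'.abs.intervalIntegrable _ _)]
    linarith

end RiemannSum

noncomputable def nodeOffset : ChebKind → ℝ
  | .one => 1 / 2 | .two => 0 | .three => 1 / 2 | .four => 0

lemma tNode_eq (w : ChebKind) (n k : ℕ) : tNode w n k = (k - nodeOffset w) * (π / nw w n) := by
  cases w <;> simp only [tNode, nodeOffset, nw, div_div_eq_mul_div] <;> ring

lemma nodeOffset_nonneg (w : ChebKind) : 0 ≤ nodeOffset w := by
  cases w <;> norm_num [nodeOffset]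

lemma nodeOffset_le_one (w : ChebKind) : nodeOffset w ≤ 1 := by
  cases w <;> norm_num [nodeOffset]

lemma nw_nonneg (w : ChebKind) (n : ℕ) : 0 ≤ nw w n := by
  cases w <;> simp only [nw] <;> positivity

lemma tNode_le_pi (w : ChebKind) (n : ℕ) : tNode w n n ≤ π := by
  cases w <;> simp only [tNode] <;>
    exact div_le_of_le_mul₀ (by positivity) pi_pos.le (by nlinarith [pi_pos])

noncomputable def tNodeWithZero (w : ChebKind) (n k : ℕ) : ℝ :=
  if k = 0 then 0 else tNode w n k

lemma tNodeWithZero_succ_sub (w : ChebKind) (n k : ℕ) :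
    tNodeWithZero w n (k + 1) - tNodeWithZero w n k
      = (if k = 0 then 1 - nodeOffset w else 1) * (π / nw w n) := by
  rcases k with _ | k
  · simp [tNodeWithZero, tNode_eq]
  · simp only [tNodeWithZero, tNode_eq, if_neg k.succ_ne_zero, if_neg (k + 1).succ_ne_zero]
    push_cast
    ring

lemma tNodeWithZero_monotone (w : ChebKind) (n : ℕ) : Monotone (tNodeWithZero w n) := by
  refine monotone_nat_of_le_succ fun k => sub_nonneg.mp ?_
  rw [tNodeWithZero_succ_sub]
  have := nodeOffset_le_one w
  have := div_nonneg pi_pos.le (nw_nonneg w n)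
  split_ifs <;> nlinarith

lemma tNodeWithZero_succ_sub_le (w : ChebKind) (n k : ℕ) :
    tNodeWithZero w n (k + 1) - tNodeWithZero w n k ≤ π / nw w n := by
  rw [tNodeWithZero_succ_sub]
  have := nodeOffset_nonneg w
  have := div_nonneg pi_pos.le (nw_nonneg w n)
  split_ifs <;> nlinarith

lemma tNodeWithZero_le_pi (w : ChebKind) (n : ℕ) : tNodeWithZero w n n ≤ π := by
  unfold tNodeWithZero
  split_ifs
  exacts [pi_pos.le, tNode_le_pi w n]

lemma sum_Icc_tNode_eq (w : ChebKind) (n : ℕ) (f : ℝ → ℝ) :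
    ∑ k ∈ Icc 1 n, f (tNode w n k) * (tNode w n k - if k = 1 then 0 else tNode w n (k - 1))
      = ∑ k ∈ Icc 1 n,
          f (tNodeWithZero w n k) * (tNodeWithZero w n k - tNodeWithZero w n (k - 1)) :=
  Finset.sum_congr rfl fun k hk => by
    obtain ⟨hk1, -⟩ := Finset.mem_Icc.mp hk
    rcases eq_or_ne k 1 with rfl | hk
    · simp [tNodeWithZero]
    · simp [tNodeWithZero, hk, show k ≠ 0 by omega, show k - 1 ≠ 0 by omega]

/-- Marcinkiewicz-type inequality at the angular Chebyshev nodes for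
even or odd trigonometric polynomials of degree at most `ν`. -/
theorem stmt9 (w : ChebKind) (n ν : ℕ) (Q : ℝ → ℝ)
    (hQ : ∃ a b : ℕ → ℝ, ∀ τ : ℝ,
      Q τ = ∑ j ∈ Finset.range (ν + 1), (a j * Real.cos (j * τ) + b j * Real.sin (j * τ)))
    (hpar : (∀ τ : ℝ, Q (-τ) = Q τ) ∨ (∀ τ : ℝ, Q (-τ) = -Q τ)) :
    ∑ k ∈ Finset.Icc 1 n,
        |Q (tNode w n k)| * (tNode w n k - if k = 1 then 0 else tNode w n (k - 1))
      ≤ (1 + 2 * π * ν / nw w n) * ∫ τ in (0 : ℝ)..π, |Q τ| := by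
  obtain ⟨a, b, hab⟩ := hQ
  obtain rfl : Q = trigPoly ν a b := funext hab
  set Q := trigPoly ν a b
  set s := tNodeWithZero w n
  have hQd : Differentiable ℝ Q := fun τ => (hasDerivAt_trigPoly ν a b τ).differentiableAt
  have hQ' : Continuous (deriv Q) := by rw [deriv_trigPoly]; fun_prop
  have hwiden : ∀ {g : ℝ → ℝ}, Continuous g →
      ∫ τ in s 0..s n, |g τ| ≤ ∫ τ in (0 : ℝ)..π, |g τ| := fun hg =>
    integral_mono_interval (by simp [s, tNodeWithZero])
      (tNodeWithZero_monotone w n (Nat.zero_le n)) (tNodeWithZero_le_pi w n)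
      (Filter.Eventually.of_forall fun _ => abs_nonneg _) (hg.abs.intervalIntegrable _ _)
  have hΔ : 0 ≤ π / nw w n := div_nonneg pi_pos.le (nw_nonneg w n)
  have hbern := integral_abs_deriv_trigPoly_le_of_even_or_odd ν a b hpar
  calc _ = ∑ k ∈ Icc 1 n, |Q (s k)| * (s k - s (k - 1)) := sum_Icc_tNode_eq w n fun x => |Q x|
    _ ≤ (∫ τ in s 0..s n, |Q τ|) + π / nw w n * ∫ τ in s 0..s n, |deriv Q τ| :=
      sum_Icc_abs_mul_sub_le hQd hQ' (tNodeWithZero_monotone w n)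
        (tNodeWithZero_succ_sub_le w n) n
    _ ≤ (∫ τ in (0 : ℝ)..π, |Q τ|) + π / nw w n * (2 * ν * ∫ τ in (0 : ℝ)..π, |Q τ|) := by
      gcongr
      · exact hwiden hQd.continuous
      · exact (hwiden hQ').trans hbern
    _ = (1 + 2 * π * ν / nw w n) * ∫ τ in (0 : ℝ)..π, |Q τ| := by ring
end

section
/- For all positive integers N and M: ∫_{−π}^{π} |sin(Nτ/2)·sin(Mτ/2)| / sin^2(τ/2) dτ ≤ 2π·sqrt(M·N). -/
open Real Set Finset Polynomial

/-! The Fejér kernel `F_n = ∑_{j<n} D_j` satisfies `sin²(nτ/2) = sin²(τ/2) F_n(τ)`, and it has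
integral `2πn` over a period because each Dirichlet kernel `D_j` integrates to `2π`. The integrand
is therefore `√(F_N F_M)` almost everywhere, and Cauchy–Schwarz bounds its integral by
`√(2πN · 2πM) = 2π√(MN)`. -/

open MeasureTheory

noncomputable def dirichletKernel (n : ℕ) (t : ℝ) : ℝ :=
  1 + 2 * ∑ k ∈ range n, Real.cos ((k + 1) * t)

noncomputable def fejerKernel (n : ℕ) (t : ℝ) : ℝ :=
  ∑ j ∈ range n, dirichletKernel j t

theorem continuous_dirichletKernel (n : ℕ) : Continuous (dirichletKernel n) := by
  unfold dirichletKernel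
  fun_prop

theorem continuous_fejerKernel (n : ℕ) : Continuous (fejerKernel n) := by
  unfold fejerKernel
  exact continuous_finsetSum _ fun j _ => continuous_dirichletKernel j

theorem cos_mul_sub_cos_succ_mul (n : ℕ) (t : ℝ) :
    Real.cos (n * t) - Real.cos ((n + 1) * t) = (1 - Real.cos t) * dirichletKernel n t := by
  induction n with
  | zero => simp [dirichletKernel]
  | succ n ih =>
    have hsucc : Real.cos ((n + 1 + 1) * t)
        = Real.cos ((n + 1) * t) * Real.cos t - Real.sin ((n + 1) * t) * Real.sin t := by
      rw [add_mul _ 1, one_mul, Real.cos_add]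
    have hpred : Real.cos (n * t)
        = Real.cos ((n + 1) * t) * Real.cos t + Real.sin ((n + 1) * t) * Real.sin t := by
      rw [← Real.cos_sub, add_mul, one_mul, add_sub_cancel_right]
    simp only [dirichletKernel, sum_range_succ, Nat.cast_succ] at ih ⊢
    linear_combination ih - hsucc - hpred

theorem one_sub_cos_mul_eq (n : ℕ) (t : ℝ) :
    1 - Real.cos (n * t) = (1 - Real.cos t) * fejerKernel n t := by
  have htel := sum_range_sub' (fun j : ℕ => Real.cos (j * t)) n
  simp only [Nat.cast_zero, zero_mul, Real.cos_zero, Nat.cast_succ] at htel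
  rw [fejerKernel, mul_sum, ← htel]
  exact sum_congr rfl fun j _ => cos_mul_sub_cos_succ_mul j t

theorem sin_mul_half_sq_eq (n : ℕ) (t : ℝ) :
    Real.sin (n * t / 2) ^ 2 = Real.sin (t / 2) ^ 2 * fejerKernel n t := by
  have hn := Real.sin_sq_eq_half_sub (n * t / 2)
  have h1 := Real.sin_sq_eq_half_sub (t / 2)
  rw [mul_div_cancel₀ _ two_ne_zero] at hn h1
  linear_combination hn - fejerKernel n t * h1 + one_sub_cos_mul_eq n t / 2

theorem integral_cos_succ_mul (k : ℕ) : ∫ t in (-π)..π, Real.cos ((k + 1) * t) = 0 := by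
  have hsin : Real.sin ((k + 1) * π) = 0 := by exact_mod_cast Real.sin_nat_mul_pi (k + 1)
  rw [intervalIntegral.integral_comp_mul_left (fun x => Real.cos x) (by positivity),
    integral_cos, mul_neg, Real.sin_neg, hsin]
  simp

theorem integral_dirichletKernel (n : ℕ) : ∫ t in (-π)..π, dirichletKernel n t = 2 * π := by
  have hcos : ∀ k ∈ range n, IntervalIntegrable (fun t => Real.cos ((k + 1) * t)) volume (-π) π :=
    fun k _ => (by fun_prop : Continuous _).intervalIntegrable _ _
  unfold dirichletKernel
  rw [intervalIntegral.integral_add intervalIntegrable_const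
      ((by fun_prop : Continuous fun t => 2 * ∑ k ∈ range n, Real.cos ((k + 1) * t)).intervalIntegrable
        _ _), intervalIntegral.integral_const_mul,
    intervalIntegral.integral_finsetSum hcos, sum_eq_zero fun k _ => integral_cos_succ_mul k]
  simp only [intervalIntegral.integral_const, smul_eq_mul, mul_one, mul_zero, add_zero]
  ring

theorem integral_fejerKernel (n : ℕ) : ∫ t in (-π)..π, fejerKernel n t = 2 * π * n := by
  unfold fejerKernel
  rw [intervalIntegral.integral_finsetSum fun j _ =>
      (continuous_dirichletKernel j).intervalIntegrable _ _]
  simp [integral_dirichletKernel, mul_comm]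

-- The zeros of `sin (t / 2)` form the null set `2πℤ`, so the junk value `x / 0 = 0` of the
-- integrand there is irrelevant.
theorem ae_sin_half_ne_zero : ∀ᵐ t : ℝ, Real.sin (t / 2) ≠ 0 := by
  refine ae_iff.mpr (measure_mono_null ?_
    ((Set.countable_range fun k : ℤ => 2 * (k * π)).measure_zero volume))
  intro t ht
  obtain ⟨k, hk⟩ := Real.sin_eq_zero_iff.mp (not_not.mp ht)
  exact ⟨k, by linarith⟩

theorem sin_mul_half_sq_div_ae_eq (n : ℕ) :
    (fun t => Real.sin (n * t / 2) ^ 2 / Real.sin (t / 2) ^ 2) =ᵐ[volume] fejerKernel n := by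
  filter_upwards [ae_sin_half_ne_zero] with t ht
  rw [sin_mul_half_sq_eq, mul_div_cancel_left₀ _ (pow_ne_zero 2 ht)]

theorem intervalIntegrable_sin_mul_half_sq_div (n : ℕ) (a b : ℝ) :
    IntervalIntegrable (fun t => Real.sin (n * t / 2) ^ 2 / Real.sin (t / 2) ^ 2) volume a b :=
  ((continuous_fejerKernel n).intervalIntegrable a b).congr_ae
    (ae_restrict_of_ae (sin_mul_half_sq_div_ae_eq n).symm)

theorem integral_sin_mul_half_sq_div (n : ℕ) :
    ∫ t in (-π)..π, Real.sin (n * t / 2) ^ 2 / Real.sin (t / 2) ^ 2 = 2 * π * n := by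
  rw [← integral_fejerKernel]
  exact intervalIntegral.integral_congr_ae
    ((sin_mul_half_sq_div_ae_eq n).mono fun t ht _ => ht)

theorem integral_sqrt_mul_le_sqrt_mul_integral {α : Type*} [MeasurableSpace α] {μ : Measure α} {f g : α → ℝ}
    (hf0 : 0 ≤ᵐ[μ] f) (hg0 : 0 ≤ᵐ[μ] g) (hf : Integrable f μ) (hg : Integrable g μ) :
    ∫ x, √(f x * g x) ∂μ ≤ √((∫ x, f x ∂μ) * ∫ x, g x ∂μ) := by
  have sqrt_rpow_two : ∀ {h : α → ℝ}, 0 ≤ᵐ[μ] h → (fun x => √(h x) ^ (2 : ℝ)) =ᵐ[μ] h :=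
    fun h0 => h0.mono fun x hx => by simp only [Real.rpow_two, Real.sq_sqrt hx]
  have memLp_sqrt : ∀ {h : α → ℝ}, 0 ≤ᵐ[μ] h → Integrable h μ →
      MemLp (fun x => √(h x)) (ENNReal.ofReal 2) μ := by
    intro h h0 hh
    rw [ENNReal.ofReal_ofNat, memLp_two_iff_integrable_sq
      (Real.continuous_sqrt.comp_aestronglyMeasurable hh.aestronglyMeasurable)]
    refine hh.congr ?_
    filter_upwards [h0] with x hx
    exact (Real.sq_sqrt hx).symm
  have holder := integral_mul_le_Lp_mul_Lq_of_nonneg Real.HolderConjugate.two_two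
    (ae_of_all _ fun x => Real.sqrt_nonneg (f x)) (ae_of_all _ fun x => Real.sqrt_nonneg (g x))
    (memLp_sqrt hf0 hf) (memLp_sqrt hg0 hg)
  rw [integral_congr_ae (sqrt_rpow_two hf0), integral_congr_ae (sqrt_rpow_two hg0),
    ← Real.sqrt_eq_rpow, ← Real.sqrt_eq_rpow, ← Real.sqrt_mul' _ (integral_nonneg_of_ae hg0)]
    at holder
  refine le_of_eq_of_le (integral_congr_ae ?_) holder
  filter_upwards [hf0] with x hx
  exact Real.sqrt_mul hx _

theorem abs_mul_div_sq_eq_sqrt (a b s : ℝ) :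
    |a * b| / s ^ 2 = √(a ^ 2 / s ^ 2 * (b ^ 2 / s ^ 2)) := by
  rw [show a ^ 2 / s ^ 2 * (b ^ 2 / s ^ 2) = (a * b / s ^ 2) ^ 2 by ring, Real.sqrt_sq_eq_abs,
    abs_div, abs_of_nonneg (sq_nonneg s)]

theorem stmt11_general (N M : ℕ) :
    ∫ τ in (-π)..π, |Real.sin (N * τ / 2) * Real.sin (M * τ / 2)| / Real.sin (τ / 2) ^ 2
      ≤ 2 * π * Real.sqrt ((M : ℝ) * N) := by
  have hpi : -π ≤ π := by linarith [Real.pi_pos]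
  have hnonneg : ∀ n : ℕ, 0 ≤ᵐ[volume.restrict (Ioc (-π) π)]
      fun t => Real.sin (n * t / 2) ^ 2 / Real.sin (t / 2) ^ 2 :=
    fun n => ae_of_all _ fun t => by positivity
  simp_rw [abs_mul_div_sq_eq_sqrt, intervalIntegral.integral_of_le hpi]
  refine (integral_sqrt_mul_le_sqrt_mul_integral (hnonneg N) (hnonneg M)
    (intervalIntegrable_sin_mul_half_sq_div N _ _).1
    (intervalIntegrable_sin_mul_half_sq_div M _ _).1).trans_eq ?_
  rw [← intervalIntegral.integral_of_le hpi, ← intervalIntegral.integral_of_le hpi,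
    integral_sin_mul_half_sq_div, integral_sin_mul_half_sq_div,
    show 2 * π * N * (2 * π * M) = (2 * π) ^ 2 * (M * N) by ring,
    Real.sqrt_mul (sq_nonneg _), Real.sqrt_sq (by positivity)]

/-- `∫_{−π}^{π} |sin(Nτ/2)sin(Mτ/2)|/sin²(τ/2) dτ ≤ 2π√(MN)`. -/
theorem stmt11 (N M : ℕ) (hN : 0 < N) (hM : 0 < M) :
    ∫ τ in (-π)..π, |Real.sin (N * τ / 2) * Real.sin (M * τ / 2)| / Real.sin (τ / 2) ^ 2
      ≤ 2 * π * Real.sqrt ((M : ℝ) * N) :=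
  stmt11_general N M
end

section
/- Let w be any one of the four Chebyshev weights and 0<m<n integers. Then the fundamental VP polynomials satisfy Φ_{n,k}^m(w; x_j^n) = 1 if j=k and 0 if j≠k, for all j,k∈{1,…,n}. Consequently, for every function f defined at the nodes, V_n^m f(x_j^n) = f(x_j^n) for j=1,…,n, i.e. the VP polynomial interpolates f at the Chebyshev zeros. -/
open Real Set Finset Polynomial

/-!
With `x = cos t`, every family is a trigonometric polynomial in disguise: `p_j(w, cos t)` times a
fixed factor (`1`, `sin t`, `cos (t/2)`, `sin (t/2)`) is a multiple of `cos ((j + a) t)` or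
`sin ((j + a) t)`, and the angular nodes are exactly the zeros of the term with `j = n`.
Hence `p_{n+s}(x_k) = -p_{n-s}(x_k)`, and since `μ_{n,n-s} + μ_{n,n+s} = 1` the filtered sum in
`Φ_{n,k}^m(x_l)` collapses to the unfiltered one, `λ_k ∑_{j<n} p_j(x_k) p_j(x_l)`.
Product-to-sum formulas turn the latter into two telescoping sums of cosines at the angles
`t_k ± t_l`, which give `δ_{kl}`.
-/

open Polynomial.Chebyshev

theorem sum_range_cos_add_mul_mul_two_sin (N : ℕ) (a θ : ℝ) :
    (∑ j ∈ range N, cos ((j + a) * θ)) * (2 * sin (θ / 2)) =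
      sin ((N + a - 1 / 2) * θ) - sin ((a - 1 / 2) * θ) := by
  induction N with
  | zero => simp
  | succ N ih =>
    have h := sin_sub_sin ((N + 1 + a - 1 / 2) * θ) ((N + a - 1 / 2) * θ)
    rw [show ((N + 1 + a - 1 / 2) * θ - (N + a - 1 / 2) * θ) / 2 = θ / 2 by ring,
      show ((N + 1 + a - 1 / 2) * θ + (N + a - 1 / 2) * θ) / 2 = (N + a) * θ by ring] at h
    rw [sum_range_succ, add_mul, ih]
    push_cast
    linear_combination -h

theorem sum_range_cos_add_one_mul {N : ℕ} {θ : ℝ} (hN : sin ((N + 1) * θ) = 0)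
    (hθ : sin (θ / 2) ≠ 0) :
    ∑ j ∈ range N, cos ((j + 1) * θ) = -(cos ((N + 1) * θ) + 1) / 2 := by
  have h := sum_range_cos_add_mul_mul_two_sin N 1 θ
  rw [show ((N : ℝ) + 1 - 1 / 2) * θ = (N + 1) * θ - θ / 2 by ring,
    show ((1 : ℝ) - 1 / 2) * θ = θ / 2 by ring, sin_sub, hN] at h
  apply mul_right_cancel₀ (mul_ne_zero two_ne_zero hθ)
  linear_combination h

theorem sum_range_cos_add_half_mul {N : ℕ} {θ : ℝ} (hN : sin ((N + 1 / 2) * θ) = 0)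
    (hθ : sin (θ / 2) ≠ 0) :
    ∑ j ∈ range N, cos ((j + 1 / 2) * θ) = -cos ((N + 1 / 2) * θ) / 2 := by
  have h := sum_range_cos_add_mul_mul_two_sin N (1 / 2) θ
  rw [show ((N : ℝ) + 1 / 2 - 1 / 2) * θ = (N + 1 / 2) * θ - θ / 2 by ring,
    show ((1 : ℝ) / 2 - 1 / 2) * θ = 0 by ring, sin_sub, hN, sin_zero] at h
  apply mul_right_cancel₀ (mul_ne_zero two_ne_zero hθ)
  linear_combination h

theorem sin_half_add_ne_zero {t u : ℝ} (ht : t ∈ Ioo 0 π) (hu : u ∈ Ioo 0 π) :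
    sin ((t + u) / 2) ≠ 0 :=
  (sin_pos_of_pos_of_lt_pi (by linarith [ht.1, hu.1]) (by linarith [ht.2, hu.2])).ne'

theorem sin_half_sub_ne_zero {t u : ℝ} (ht : t ∈ Ioo 0 π) (hu : u ∈ Ioo 0 π)
    (htu : t ≠ u) : sin ((t - u) / 2) ≠ 0 := by
  rw [Ne, sin_eq_zero_iff_of_lt_of_lt (by linarith [ht.1, hu.2, pi_pos])
    (by linarith [ht.2, hu.1, pi_pos])]
  exact fun h => htu (by linarith)

theorem sin_half_ne_zero {t : ℝ} (ht : t ∈ Ioo 0 π) : sin (t / 2) ≠ 0 :=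
  (sin_pos_of_pos_of_lt_pi (by linarith [ht.1]) (by linarith [ht.2, pi_pos])).ne'

theorem cos_half_ne_zero {t : ℝ} (ht : t ∈ Ioo 0 π) : cos (t / 2) ≠ 0 :=
  (cos_pos_of_mem_Ioo ⟨by linarith [ht.1, pi_pos], by linarith [ht.2]⟩).ne'

theorem pEval_one_cos {j : ℕ} (hj : j ≠ 0) (t : ℝ) :
    pEval .one j (cos t) = √(2 / π) * cos (j * t) := by
  obtain ⟨i, rfl⟩ := Nat.exists_eq_succ_of_ne_zero hj
  simp [pEval, pPoly]

theorem pEval_one_zero (x : ℝ) : pEval .one 0 x = 1 / √π := by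
  simp [pEval, pPoly]

theorem pEval_two_cos_mul_sin (j : ℕ) (t : ℝ) :
    pEval .two j (cos t) * sin t = √(2 / π) * sin ((j + 1) * t) := by
  simp [pEval, pPoly, mul_assoc]

theorem pEval_three_cos_mul_cos_half {t : ℝ} (ht : sin (t / 2) ≠ 0) (j : ℕ) :
    pEval .three j (cos t) * cos (t / 2) = 1 / √π * cos ((j + 1 / 2) * t) := by
  have hU := U_real_cos t j
  have hU' := U_real_cos t (j - 1)
  have hsub := sin_sub_sin ((j + 1) * t) (j * t)
  rw [show ((j + 1) * t - j * t) / 2 = t / 2 by ring,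
    show ((j + 1) * t + j * t) / 2 = (j + 1 / 2) * t by ring] at hsub
  have hsin := sin_two_mul (t / 2)
  rw [show 2 * (t / 2) = t by ring] at hsin
  -- after multiplying by `2 sin (t / 2)`, the factor `cos (t / 2)` becomes `sin t`
  apply mul_right_cancel₀ (mul_ne_zero two_ne_zero ht)
  simp only [pEval, pPoly, eval_mul, eval_sub, eval_C]
  push_cast at hU hU'
  rw [sub_add_cancel] at hU'
  linear_combination (1 / √π) * (hU - hU' + hsub
    - ((U ℝ j).eval (cos t) - (U ℝ (j - 1)).eval (cos t)) * hsin)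

theorem pEval_four_cos_mul_sin_half {t : ℝ} (ht : cos (t / 2) ≠ 0) (j : ℕ) :
    pEval .four j (cos t) * sin (t / 2) = 1 / √π * sin ((j + 1 / 2) * t) := by
  have hU := U_real_cos t j
  have hU' := U_real_cos t (j - 1)
  have hadd := sin_add_sin ((j + 1) * t) (j * t)
  rw [show ((j + 1) * t + j * t) / 2 = (j + 1 / 2) * t by ring,
    show ((j + 1) * t - j * t) / 2 = t / 2 by ring] at hadd
  have hsin := sin_two_mul (t / 2)
  rw [show 2 * (t / 2) = t by ring] at hsin
  apply mul_right_cancel₀ (mul_ne_zero two_ne_zero ht)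
  simp only [pEval, pPoly, eval_mul, eval_add, eval_C]
  push_cast at hU hU'
  rw [sub_add_cancel] at hU'
  linear_combination (1 / √π) * (hU + hU' + hadd
    - ((U ℝ j).eval (cos t) + (U ℝ (j - 1)).eval (cos t)) * hsin)

theorem tNode_mem_Ioo (w : ChebKind) {n k : ℕ} (hk : k ∈ Finset.Icc 1 n) :
    tNode w n k ∈ Ioo 0 π := by
  obtain ⟨hk1, hkn⟩ := Finset.mem_Icc.mp hk
  have hk1' : (1 : ℝ) ≤ k := by exact_mod_cast hk1
  have hkn' : (k : ℝ) ≤ n := by exact_mod_cast hkn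
  cases w <;> simp only [tNode] <;> constructor <;>
    first
    | apply div_pos <;> nlinarith [pi_pos]
    | rw [div_lt_iff₀ (by linarith)]; nlinarith [pi_pos]

theorem cos_mul_tNode_one {n : ℕ} (hn : n ≠ 0) (k : ℕ) : cos (n * tNode .one n k) = 0 := by
  rw [cos_eq_zero_iff]
  exact ⟨k - 1, by simp only [tNode]; push_cast; field_simp; ring⟩

theorem sin_mul_tNode_two (n k : ℕ) : sin ((n + 1) * tNode .two n k) = 0 := by
  rw [show (n + 1) * tNode .two n k = k * π by simp only [tNode]; field_simp]
  exact sin_nat_mul_pi k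

theorem cos_mul_tNode_three (n k : ℕ) : cos ((n + 1 / 2) * tNode .three n k) = 0 := by
  rw [cos_eq_zero_iff]
  exact ⟨k - 1, by simp only [tNode]; push_cast; field_simp; ring⟩

theorem sin_mul_tNode_four (n k : ℕ) : sin ((n + 1 / 2) * tNode .four n k) = 0 := by
  rw [show (n + 1 / 2) * tNode .four n k = k * π by simp only [tNode]; field_simp]
  exact sin_nat_mul_pi k

theorem tNode_injective (w : ChebKind) {n : ℕ} (hn : n ≠ 0) :
    Function.Injective (tNode w n) := by
  intro k l h
  have hn' : (n : ℝ) ≠ 0 := by exact_mod_cast hn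
  cases w <;> simp only [tNode] at h <;> field_simp at h <;>
    exact_mod_cast (by linarith : (k : ℝ) = l)

theorem pEval_one_add_cos_eq_neg {n s : ℕ} {t : ℝ} (hnt : cos (n * t) = 0) (hs : s < n) :
    pEval .one (n + s) (cos t) = -pEval .one (n - s) (cos t) := by
  rw [pEval_one_cos (by omega), pEval_one_cos (by omega), Nat.cast_add, Nat.cast_sub hs.le,
    add_mul, sub_mul, cos_add, cos_sub, hnt]
  ring

theorem pEval_two_add_cos_eq_neg {n s : ℕ} {t : ℝ} (hnt : sin ((n + 1) * t) = 0)
    (ht : sin t ≠ 0) (hs : s ≤ n) :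
    pEval .two (n + s) (cos t) = -pEval .two (n - s) (cos t) := by
  apply mul_right_cancel₀ ht
  rw [neg_mul, pEval_two_cos_mul_sin, pEval_two_cos_mul_sin, Nat.cast_add, Nat.cast_sub hs,
    show ((n : ℝ) + s + 1) * t = (n + 1) * t + s * t by ring,
    show ((n : ℝ) - s + 1) * t = (n + 1) * t - s * t by ring, sin_add, sin_sub, hnt]
  ring

theorem pEval_three_add_cos_eq_neg {n s : ℕ} {t : ℝ} (hnt : cos ((n + 1 / 2) * t) = 0)
    (ht : sin (t / 2) ≠ 0) (hct : cos (t / 2) ≠ 0) (hs : s ≤ n) :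
    pEval .three (n + s) (cos t) = -pEval .three (n - s) (cos t) := by
  apply mul_right_cancel₀ hct
  rw [neg_mul, pEval_three_cos_mul_cos_half ht, pEval_three_cos_mul_cos_half ht, Nat.cast_add,
    Nat.cast_sub hs, show ((n : ℝ) + s + 1 / 2) * t = (n + 1 / 2) * t + s * t by ring,
    show ((n : ℝ) - s + 1 / 2) * t = (n + 1 / 2) * t - s * t by ring, cos_add, cos_sub, hnt]
  ring

theorem pEval_four_add_cos_eq_neg {n s : ℕ} {t : ℝ} (hnt : sin ((n + 1 / 2) * t) = 0)
    (ht : sin (t / 2) ≠ 0) (hct : cos (t / 2) ≠ 0) (hs : s ≤ n) :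
    pEval .four (n + s) (cos t) = -pEval .four (n - s) (cos t) := by
  apply mul_right_cancel₀ ht
  rw [neg_mul, pEval_four_cos_mul_sin_half hct, pEval_four_cos_mul_sin_half hct, Nat.cast_add,
    Nat.cast_sub hs, show ((n : ℝ) + s + 1 / 2) * t = (n + 1 / 2) * t + s * t by ring,
    show ((n : ℝ) - s + 1 / 2) * t = (n + 1 / 2) * t - s * t by ring, sin_add, sin_sub, hnt]
  ring

theorem pEval_add_xNode_eq_neg (w : ChebKind) {n k s : ℕ} (hk : k ∈ Finset.Icc 1 n)
    (hs : s < n) :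
    pEval w (n + s) (xNode w n k) = -pEval w (n - s) (xNode w n k) := by
  have ht := tNode_mem_Ioo w hk
  cases w
  · exact pEval_one_add_cos_eq_neg (cos_mul_tNode_one (by omega) k) hs
  · exact pEval_two_add_cos_eq_neg (sin_mul_tNode_two n k)
      (sin_pos_of_pos_of_lt_pi ht.1 ht.2).ne' hs.le
  · exact pEval_three_add_cos_eq_neg (cos_mul_tNode_three n k) (sin_half_ne_zero ht)
      (cos_half_ne_zero ht) hs.le
  · exact pEval_four_add_cos_eq_neg (sin_mul_tNode_four n k) (sin_half_ne_zero ht)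
      (cos_half_ne_zero ht) hs.le

theorem sum_pEval_one_cos_mul_pEval_one_cos {n : ℕ} {t u : ℝ} (ht : t ∈ Ioo 0 π)
    (hu : u ∈ Ioo 0 π) (hnt : cos (n * t) = 0) (hnu : cos (n * u) = 0) :
    ∑ j ∈ range n, pEval .one j (cos t) * pEval .one j (cos u) =
      if t = u then n / π else 0 := by
  obtain _ | N := n
  · simp at hnt
  have hterm (j : ℕ) : pEval .one (j + 1) (cos t) * pEval .one (j + 1) (cos u) =
      (cos ((j + 1) * (t - u)) + cos ((j + 1) * (t + u))) / π := by
    rw [pEval_one_cos j.succ_ne_zero, pEval_one_cos j.succ_ne_zero, mul_mul_mul_comm,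
      mul_self_sqrt (by positivity), mul_sub, mul_add, ← two_mul_cos_mul_cos]
    push_cast
    ring
  have h0 : pEval .one 0 (cos t) * pEval .one 0 (cos u) = 1 / π := by
    rw [pEval_one_zero, pEval_one_zero, div_mul_div_comm, mul_self_sqrt pi_pos.le, one_mul]
  push_cast at hnt hnu ⊢
  have hadd := sum_range_cos_add_one_mul (N := N) (θ := t + u)
    (by rw [mul_add, sin_add, hnt, hnu]; ring) (sin_half_add_ne_zero ht hu)
  rw [sum_range_succ', sum_congr rfl fun j _ => hterm j, ← sum_div, sum_add_distrib, hadd, h0]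
  split_ifs with htu
  · subst htu
    rw [sub_self, ← two_mul, mul_left_comm, cos_two_mul, hnt]
    simp only [mul_zero, cos_zero, sum_const, card_range, nsmul_eq_mul, mul_one]
    ring
  · have hsub := sum_range_cos_add_one_mul (N := N) (θ := t - u)
      (by rw [mul_sub, sin_sub, hnt, hnu]; ring) (sin_half_sub_ne_zero ht hu htu)
    rw [hsub, mul_add, mul_sub, cos_add, cos_sub, hnt, hnu]
    ring

theorem sum_pEval_two_cos_mul_pEval_two_cos {n : ℕ} {t u : ℝ} (ht : t ∈ Ioo 0 π)
    (hu : u ∈ Ioo 0 π) (hnt : sin ((n + 1) * t) = 0) (hnu : sin ((n + 1) * u) = 0) :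
    (∑ j ∈ range n, pEval .two j (cos t) * pEval .two j (cos u)) * (sin t * sin u) =
      if t = u then (n + 1) / π else 0 := by
  have hterm (j : ℕ) : pEval .two j (cos t) * pEval .two j (cos u) * (sin t * sin u) =
      (cos ((j + 1) * (t - u)) - cos ((j + 1) * (t + u))) / π := by
    rw [mul_mul_mul_comm, pEval_two_cos_mul_sin, pEval_two_cos_mul_sin, mul_sub, mul_add,
      ← two_mul_sin_mul_sin, mul_mul_mul_comm, mul_self_sqrt (by positivity)]
    ring
  have hadd := sum_range_cos_add_one_mul (N := n) (θ := t + u)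
    (by rw [mul_add, sin_add, hnt, hnu]; ring) (sin_half_add_ne_zero ht hu)
  rw [sum_mul, sum_congr rfl fun j _ => hterm j, ← sum_div, sum_sub_distrib, hadd]
  split_ifs with htu
  · subst htu
    rw [sub_self, ← two_mul, mul_left_comm, cos_two_mul', cos_sq', hnt]
    simp only [mul_zero, cos_zero, sum_const, card_range, nsmul_eq_mul, mul_one]
    ring
  · have hsub := sum_range_cos_add_one_mul (N := n) (θ := t - u)
      (by rw [mul_sub, sin_sub, hnt, hnu]; ring) (sin_half_sub_ne_zero ht hu htu)
    rw [hsub, mul_add, mul_sub, cos_add, cos_sub, hnt, hnu]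
    ring

theorem sum_pEval_three_cos_mul_pEval_three_cos {n : ℕ} {t u : ℝ} (ht : t ∈ Ioo 0 π)
    (hu : u ∈ Ioo 0 π) (hnt : cos ((n + 1 / 2) * t) = 0) (hnu : cos ((n + 1 / 2) * u) = 0) :
    (∑ j ∈ range n, pEval .three j (cos t) * pEval .three j (cos u)) *
        (cos (t / 2) * cos (u / 2)) =
      if t = u then (2 * n + 1) / (4 * π) else 0 := by
  have hterm (j : ℕ) :
      pEval .three j (cos t) * pEval .three j (cos u) * (cos (t / 2) * cos (u / 2)) =
        (cos ((j + 1 / 2) * (t - u)) + cos ((j + 1 / 2) * (t + u))) / (2 * π) := by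
    rw [mul_mul_mul_comm, pEval_three_cos_mul_cos_half (sin_half_ne_zero ht),
      pEval_three_cos_mul_cos_half (sin_half_ne_zero hu), mul_mul_mul_comm, div_mul_div_comm,
      mul_self_sqrt pi_pos.le, mul_sub, mul_add, ← two_mul_cos_mul_cos]
    ring
  have hadd := sum_range_cos_add_half_mul (N := n) (θ := t + u)
    (by rw [mul_add, sin_add, hnt, hnu]; ring) (sin_half_add_ne_zero ht hu)
  rw [sum_mul, sum_congr rfl fun j _ => hterm j, ← sum_div, sum_add_distrib, hadd]
  split_ifs with htu
  · subst htu
    rw [sub_self, ← two_mul, mul_left_comm, cos_two_mul, hnt]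
    simp only [mul_zero, cos_zero, sum_const, card_range, nsmul_eq_mul, mul_one]
    ring
  · have hsub := sum_range_cos_add_half_mul (N := n) (θ := t - u)
      (by rw [mul_sub, sin_sub, hnt, hnu]; ring) (sin_half_sub_ne_zero ht hu htu)
    rw [hsub, mul_add, mul_sub, cos_add, cos_sub, hnt, hnu]
    ring

theorem sum_pEval_four_cos_mul_pEval_four_cos {n : ℕ} {t u : ℝ} (ht : t ∈ Ioo 0 π)
    (hu : u ∈ Ioo 0 π) (hnt : sin ((n + 1 / 2) * t) = 0) (hnu : sin ((n + 1 / 2) * u) = 0) :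
    (∑ j ∈ range n, pEval .four j (cos t) * pEval .four j (cos u)) *
        (sin (t / 2) * sin (u / 2)) =
      if t = u then (2 * n + 1) / (4 * π) else 0 := by
  have hterm (j : ℕ) :
      pEval .four j (cos t) * pEval .four j (cos u) * (sin (t / 2) * sin (u / 2)) =
        (cos ((j + 1 / 2) * (t - u)) - cos ((j + 1 / 2) * (t + u))) / (2 * π) := by
    rw [mul_mul_mul_comm, pEval_four_cos_mul_sin_half (cos_half_ne_zero ht),
      pEval_four_cos_mul_sin_half (cos_half_ne_zero hu), mul_mul_mul_comm, div_mul_div_comm,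
      mul_self_sqrt pi_pos.le, mul_sub, mul_add, ← two_mul_sin_mul_sin]
    ring
  have hadd := sum_range_cos_add_half_mul (N := n) (θ := t + u)
    (by rw [mul_add, sin_add, hnt, hnu]; ring) (sin_half_add_ne_zero ht hu)
  rw [sum_mul, sum_congr rfl fun j _ => hterm j, ← sum_div, sum_sub_distrib, hadd]
  split_ifs with htu
  · subst htu
    rw [sub_self, ← two_mul, mul_left_comm, cos_two_mul', cos_sq', hnt]
    simp only [mul_zero, cos_zero, sum_const, card_range, nsmul_eq_mul, mul_one]
    ring
  · have hsub := sum_range_cos_add_half_mul (N := n) (θ := t - u)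
      (by rw [mul_sub, sin_sub, hnt, hnu]; ring) (sin_half_sub_ne_zero ht hu htu)
    rw [hsub, mul_add, mul_sub, cos_add, cos_sub, hnt, hnu]
    ring

theorem lam_mul_sum_pEval_xNode_mul_pEval_xNode (w : ChebKind) {n k l : ℕ}
    (hk : k ∈ Finset.Icc 1 n) (hl : l ∈ Finset.Icc 1 n) :
    lam w n k * ∑ j ∈ range n, pEval w j (xNode w n k) * pEval w j (xNode w n l) =
      if l = k then 1 else 0 := by
  have hn : n ≠ 0 := by have := Finset.mem_Icc.mp hk; omega
  have ht := tNode_mem_Ioo w hk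
  have hu := tNode_mem_Ioo w hl
  have hkl : tNode w n k = tNode w n l ↔ l = k := (tNode_injective w hn).eq_iff.trans eq_comm
  simp only [xNode]
  cases w
  · rw [sum_pEval_one_cos_mul_pEval_one_cos ht hu (cos_mul_tNode_one hn k)
      (cos_mul_tNode_one hn l)]
    simp only [hkl, lam]
    split_ifs with h
    · field_simp
    · simp
  · have hst := (sin_pos_of_pos_of_lt_pi ht.1 ht.2).ne'
    have hsu := (sin_pos_of_pos_of_lt_pi hu.1 hu.2).ne'
    rw [← mul_div_cancel_right₀ (∑ j ∈ range n, _) (mul_ne_zero hst hsu),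
      sum_pEval_two_cos_mul_pEval_two_cos ht hu (sin_mul_tNode_two n k) (sin_mul_tNode_two n l)]
    simp only [hkl, lam]
    split_ifs with h
    · subst h
      field_simp
    · simp
  · have hct := cos_half_ne_zero ht
    rw [← mul_div_cancel_right₀ (∑ j ∈ range n, _) (mul_ne_zero hct (cos_half_ne_zero hu)),
      sum_pEval_three_cos_mul_pEval_three_cos ht hu (cos_mul_tNode_three n k)
        (cos_mul_tNode_three n l)]
    simp only [hkl, lam]
    split_ifs with h
    · subst h
      field_simp
    · simp
  · have hst := sin_half_ne_zero ht
    rw [← mul_div_cancel_right₀ (∑ j ∈ range n, _) (mul_ne_zero hst (sin_half_ne_zero hu)),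
      sum_pEval_four_cos_mul_pEval_four_cos ht hu (sin_mul_tNode_four n k) (sin_mul_tNode_four n l)]
    simp only [hkl, lam]
    split_ifs with h
    · subst h
      field_simp
    · simp

theorem sum_range_ramp_mul {m : ℕ} {Q : ℕ → ℝ} (hQ : ∀ s < m, Q (m + s) = Q (m - s))
    (hQm : Q m = 0) :
    ∑ i ∈ range (2 * m), ((2 * m - i) / (2 * m) : ℝ) * Q i = ∑ i ∈ range m, Q i := by
  simp only [two_mul]
  let h (i : ℕ) : ℝ := i / (m + m) * Q i
  have hright : ∑ s ∈ range m, ((m + m - (m + s : ℕ)) / (m + m) : ℝ) * Q (m + s) =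
      ∑ i ∈ range m, h i := by
    have hterm : ∀ s ∈ range m,
        ((m + m - (m + s : ℕ)) / (m + m) : ℝ) * Q (m + s) = h (m - 1 - s + 1) := by
      intro s hs
      have hsm := mem_range.mp hs
      simp only [h, show m - 1 - s + 1 = m - s by omega, hQ s hsm, Nat.cast_sub hsm.le]
      push_cast
      ring
    -- reflected through `m`, the upper half of the ramp supplies the missing weights `i / (2m)`
    have hshift := sum_range_succ' h m
    simp only [sum_range_succ, h, hQm, CharP.cast_eq_zero, zero_div, zero_mul, mul_zero,
      add_zero] at hshift
    rw [sum_congr rfl hterm, sum_range_reflect (fun i => h (i + 1)) m, hshift]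
  rw [sum_range_add, hright, ← sum_add_distrib]
  refine sum_congr rfl fun i hi => ?_
  have hm : (m : ℝ) ≠ 0 := Nat.cast_ne_zero.mpr (by have := mem_range.mp hi; omega)
  simp only [h]
  field_simp
  ring

theorem sum_range_mufilt_mul {n m : ℕ} (hmn : m ≤ n) {P : ℕ → ℝ}
    (hP : ∀ s < m, P (n + s) = P (n - s)) (hPn : P n = 0) :
    ∑ j ∈ range (n + m), mufilt n m j * P j = ∑ j ∈ range n, P j := by
  obtain ⟨r, rfl⟩ : ∃ r, n = r + m := ⟨n - m, by omega⟩
  have hlow : ∀ j ∈ range r, mufilt (r + m) m j * P j = P j := fun j hj => by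
    rw [mufilt, if_pos (by have := mem_range.mp hj; omega), one_mul]
  have hramp : ∀ i ∈ range (2 * m),
      mufilt (r + m) m (r + i) * P (r + i) = ((2 * m - i) / (2 * m) : ℝ) * P (r + i) := by
    intro i hi
    have hm : (m : ℝ) ≠ 0 := Nat.cast_ne_zero.mpr (by have := mem_range.mp hi; omega)
    rcases Nat.eq_zero_or_pos i with rfl | hi0
    · rw [mufilt, if_pos (by omega)]
      simp [hm]
    · rw [mufilt, if_neg (by omega)]
      push_cast
      ring
  rw [add_assoc, ← two_mul, sum_range_add, sum_range_add, sum_congr rfl hlow,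
    sum_congr rfl hramp]
  congr 1
  refine sum_range_ramp_mul (Q := fun i => P (r + i)) (fun s hs => ?_) (by simpa using hPn)
  simpa [add_assoc, Nat.add_sub_assoc hs.le] using hP s hs

theorem Phi_xNode (w : ChebKind) {n m k l : ℕ} (hmn : m ≤ n) (hk : k ∈ Finset.Icc 1 n)
    (hl : l ∈ Finset.Icc 1 n) : Phi w n m k (xNode w n l) = if l = k then 1 else 0 := by
  have hn : 0 < n := by have := Finset.mem_Icc.mp hk; omega
  have hzero : pEval w n (xNode w n k) = 0 := by
    have h := pEval_add_xNode_eq_neg w hk hn (s := 0)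
    simp only [add_zero, Nat.sub_zero] at h
    linarith
  rw [Phi, ← lam_mul_sum_pEval_xNode_mul_pEval_xNode w hk hl]
  simp_rw [mul_assoc]
  congr 1
  refine sum_range_mufilt_mul hmn (fun s hs => ?_) (by rw [hzero, zero_mul])
  rw [pEval_add_xNode_eq_neg w hk (by omega), pEval_add_xNode_eq_neg w hl (by omega), neg_mul_neg]

theorem stmt13_general (w : ChebKind) (n m : ℕ) (hmn : m < n) :
    (∀ j ∈ Finset.Icc 1 n, ∀ k ∈ Finset.Icc 1 n,
        Phi w n m k (xNode w n j) = if j = k then 1 else 0) ∧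
    (∀ f : ℝ → ℝ, ∀ j ∈ Finset.Icc 1 n, VP w n m f (xNode w n j) = f (xNode w n j)) := by
  have hdelta : ∀ j ∈ Finset.Icc 1 n, ∀ k ∈ Finset.Icc 1 n,
      Phi w n m k (xNode w n j) = if j = k then 1 else 0 :=
    fun j hj k hk => Phi_xNode w hmn.le hk hj
  refine ⟨hdelta, fun f j hj => ?_⟩
  rw [VP, sum_congr rfl fun k hk => by rw [hdelta j hj k hk, mul_ite, mul_one, mul_zero],
    sum_ite_eq, if_pos hj]

/-- the fundamental VP polynomials satisfy `Φ_{n,k}^m(x_j^n)=δ_{jk}`,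
hence `V_n^m f` interpolates `f` at the Chebyshev zeros. -/
theorem stmt13 (w : ChebKind) (n m : ℕ) (hm : 0 < m) (hmn : m < n) :
    (∀ j ∈ Finset.Icc 1 n, ∀ k ∈ Finset.Icc 1 n,
        Phi w n m k (xNode w n j) = if j = k then 1 else 0) ∧
    (∀ f : ℝ → ℝ, ∀ j ∈ Finset.Icc 1 n, VP w n m f (xNode w n j) = f (xNode w n j)) :=
  stmt13_general w n m hmn
end
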